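/- Let X and Y be Banach spaces and let f: X → Y be a coarse Lipschitz map. Assume there exist A₀ > 0 and K ≥ 1 such that for every A ≥ A₀ and every maximal A-separated subset 𝓜 of X, the image f(𝓜) is a net in Y and (1/K)·‖x−x'‖ ≤ ‖f(x)−f(x')‖ ≤ K·‖x−x'‖ for all x, x' ∈ 𝓜. Then there exist continuous coarse Lipschitz maps φ: X → Y and ψ: Y → X and a constant C ≥ 0 such that ‖φ(x)−f(x)‖ ≤ C for all x ∈ X, ‖ψ(φ(x))−x‖ ≤ C for all x ∈ X, and ‖φ(ψ(y))−y‖ ≤ C for all y ∈ Y. -/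

import Mathlib

open Metric Filter Topology Pointwise
open scoped ENNReal NNReal

noncomputable section

section Defs

variable {M N : Type*} [PseudoMetricSpace M] [PseudoMetricSpace N]

/-- `Lip_s(f) = sup { dist (f x) (f y) / dist x y : dist x y ≥ s }`, valued in `ℝ≥0∞`. -/
def lipS (f : M → N) (s : ℝ) : ℝ≥0∞ :=
  ⨆ (x : M) (y : M) (_ : s ≤ dist x y), ENNReal.ofReal (dist (f x) (f y) / dist x y)

/-- `Lip_∞(f) = inf_{s > 0} Lip_s(f)`. -/
def lipInfty (f : M → N) : ℝ≥0∞ := ⨅ (s : ℝ) (_ : 0 < s), lipS f s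

/-- A map is coarse Lipschitz when `Lip_∞(f) < ∞`. -/
def CoarseLipschitz (f : M → N) : Prop := lipInfty f < ⊤

/-- Coarse Lipschitz equivalence. -/
def IsCLEquiv (f : M → N) : Prop :=
  CoarseLipschitz f ∧ ∃ g : N → M, CoarseLipschitz g ∧ ∃ C : ℝ, 0 ≤ C ∧
    (∀ x, dist (g (f x)) x ≤ C) ∧ (∀ y, dist (f (g y)) y ≤ C)

/-- An `(a,b)`-net for some `0 < a ≤ b`. -/
def IsNet (s : Set M) : Prop :=
  ∃ a b : ℝ, 0 < a ∧ a ≤ b ∧ (∀ z ∈ s, ∀ z' ∈ s, z ≠ z' → a ≤ dist z z') ∧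
    ∀ x : M, Metric.infDist x s < b

/-- `A`-separated subset. -/
def IsSep (A : ℝ) (s : Set M) : Prop := ∀ x ∈ s, ∀ x' ∈ s, x ≠ x' → A ≤ dist x x'

/-- Maximal `A`-separated subset. -/
def IsMaxSep (A : ℝ) (s : Set M) : Prop :=
  IsSep A s ∧ ∀ t : Set M, s ⊆ t → IsSep A t → t = s

end Defs

/-!
Fix a maximal `A₀`-separated set `𝓜 ⊆ X`. It is an `A₀`-net of `X`, `f` is `K`-bi-Lipschitz on it
and `f '' 𝓜` is a `b`-net of `Y`. Gluing the values `f m` with a partition of unity subordinate to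
the balls `ball m A₀` gives a continuous `φ` that stays within `2 K A₀` of `f m` near each `m`;
symmetrically, gluing the points `m` over the balls `ball (f m) b` gives a continuous `ψ`. Such
glued maps are coarse Lipschitz, `φ` is uniformly close to `f` because `f` is coarse Lipschitz,
and the bi-Lipschitz bounds on the net make `φ` and `ψ` coarse inverses of each other.
-/
section CoarseLipschitz

variable {M N : Type*} [PseudoMetricSpace M] [PseudoMetricSpace N] {f : M → N}

theorem coarseLipschitz_iff :
    CoarseLipschitz f ↔ ∃ s > 0, ∃ L : ℝ, ∀ x y, s ≤ dist x y → dist (f x) (f y) ≤ L * dist x y := by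
  constructor
  · intro hf
    obtain ⟨s, hs⟩ := iInf_lt_iff.mp hf
    obtain ⟨hs0, hlt⟩ := iInf_lt_iff.mp hs
    refine ⟨s, hs0, (lipS f s).toReal, fun x y hxy => ?_⟩
    have hd : 0 < dist x y := hs0.trans_le hxy
    have hle : ENNReal.ofReal (dist (f x) (f y) / dist x y) ≤ lipS f s :=
      le_iSup_of_le x <| le_iSup_of_le y <| le_iSup_of_le hxy le_rfl
    rw [← div_le_iff₀ hd]
    exact (ENNReal.ofReal_le_iff_le_toReal hlt.ne).mp hle
  · rintro ⟨s, hs0, L, hL⟩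
    have hle : lipS f s ≤ ENNReal.ofReal L :=
      iSup₂_le fun x y => iSup_le fun hxy => ENNReal.ofReal_le_ofReal <|
        (div_le_iff₀ (hs0.trans_le hxy)).mpr (hL x y hxy)
    exact (iInf₂_le s hs0).trans_lt (hle.trans_lt ENNReal.ofReal_lt_top)

theorem CoarseLipschitz.of_dist_le_mul_add (L B : ℝ)
    (h : ∀ x y, dist (f x) (f y) ≤ L * dist x y + B) : CoarseLipschitz f :=
  coarseLipschitz_iff.mpr ⟨1, one_pos, L + |B|, fun x y hxy => by
    nlinarith [h x y, le_abs_self B, abs_nonneg B]⟩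

end CoarseLipschitz

theorem CoarseLipschitz.exists_dist_le_mul_add {X N : Type*} [NormedAddCommGroup X]
    [NormedSpace ℝ X] [PseudoMetricSpace N] {f : X → N} (hf : CoarseLipschitz f) :
    ∃ L B : ℝ, 0 ≤ L ∧ ∀ x y, dist (f x) (f y) ≤ L * dist x y + B := by
  rcases subsingleton_or_nontrivial X with hX | hX
  · exact ⟨0, 0, le_rfl, fun x y => by simp [Subsingleton.elim x y]⟩
  obtain ⟨s, hs0, L, hL⟩ := coarseLipschitz_iff.mp hf
  have hL' : ∀ x y, s ≤ dist x y → dist (f x) (f y) ≤ max L 0 * dist x y := fun x y hxy =>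
    (hL x y hxy).trans (mul_le_mul_of_nonneg_right (le_max_left _ _) dist_nonneg)
  obtain ⟨u, hu⟩ := exists_norm_eq X (by positivity : 0 ≤ 2 * s)
  refine ⟨max L 0, 4 * max L 0 * s, le_max_right _ _, fun x y => ?_⟩
  rcases le_or_gt s (dist x y) with hxy | hxy
  · nlinarith [hL' x y hxy, le_max_right L 0]
  -- at scales below `s`, pass through a point `z` at distance `2 s` from `x`
  set z := x + u
  have hxz : dist x z = 2 * s := by simp [z, dist_eq_norm, hu]
  have hyz : s ≤ dist y z := by linarith [dist_triangle x y z]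
  have hzy : dist z y ≤ dist x y + 2 * s := by linarith [dist_triangle_left z y x]
  calc dist (f x) (f y) ≤ dist (f x) (f z) + dist (f z) (f y) := dist_triangle _ _ _
    _ ≤ max L 0 * dist x z + max L 0 * dist z y := by
        gcongr
        · exact hL' x z (by linarith)
        · exact hL' z y (by rwa [dist_comm])
    _ ≤ max L 0 * dist x y + 4 * max L 0 * s := by
        rw [hxz]; nlinarith [le_max_right L 0]

section Separated

variable {M : Type*} [PseudoMetricSpace M]

theorem exists_isMaxSep (A : ℝ) : ∃ s : Set M, IsMaxSep A s := by
  obtain ⟨s, hs⟩ := zorn_subset {s : Set M | IsSep A s} fun c hc hchain => by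
    refine ⟨⋃₀ c, ?_, fun s hs => Set.subset_sUnion_of_mem hs⟩
    rintro x ⟨t, htc, hxt⟩ x' ⟨t', htc', hxt'⟩ hne
    rcases hchain.total htc htc' with htt' | ht't
    · exact hc htc' x (htt' hxt) x' hxt' hne
    · exact hc htc x hxt x' (ht't hxt') hne
  exact ⟨s, hs.prop, fun t hst ht => (hs.eq_of_subset ht hst).symm⟩

theorem IsMaxSep.exists_dist_lt {A : ℝ} (hA : 0 < A) {s : Set M} (hs : IsMaxSep A s) (x : M) :
    ∃ z ∈ s, dist x z < A := by
  by_contra! hfar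
  have hx : x ∉ s := fun hx => (hfar x hx).not_gt (by simpa using hA)
  have hsep : IsSep A (insert x s) := by
    rintro z (rfl | hz) z' (rfl | hz') hne
    · exact absurd rfl hne
    · exact hfar z' hz'
    · exact dist_comm z z' ▸ hfar z hz
    · exact hs.1 z hz z' hz' hne
  exact hx (hs.2 _ (Set.subset_insert x s) hsep ▸ Set.mem_insert x s)

theorem IsNet.exists_forall_exists_dist_lt {s : Set M} (hs : IsNet s) (hne : s.Nonempty) :
    ∃ b : ℝ, ∀ x, ∃ z ∈ s, dist x z < b := by
  obtain ⟨-, b, -, -, -, hb⟩ := hs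
  exact ⟨b, fun x => (infDist_lt_iff hne).mp (hb x)⟩

end Separated

section Cover

variable {Z W ι : Type*} [PseudoMetricSpace Z] [PseudoMetricSpace W] {c : ι → Z} {r K : ℝ}

theorem coarseLipschitz_of_dist_le_of_cover {v : ι → W} {g : Z → W} {R : ℝ} (hK : 0 ≤ K)
    (hcov : ∀ z, ∃ i, dist z (c i) < r) (hv : ∀ i j, dist (v i) (v j) ≤ K * dist (c i) (c j))
    (hg : ∀ z i, dist z (c i) < r → dist (g z) (v i) ≤ R) : CoarseLipschitz g := by
  refine CoarseLipschitz.of_dist_le_mul_add K (2 * R + 2 * K * r) fun z w => ?_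
  obtain ⟨i, hi⟩ := hcov z
  obtain ⟨j, hj⟩ := hcov w
  have hcij : dist (c i) (c j) ≤ dist z w + 2 * r := by
    linarith [dist_triangle4 (c i) z w (c j), dist_comm (c i) z]
  calc dist (g z) (g w) ≤ dist (g z) (v i) + dist (v i) (v j) + dist (v j) (g w) :=
        dist_triangle4 _ _ _ _
    _ ≤ R + K * (dist z w + 2 * r) + R := by
        gcongr
        · exact hg z i hi
        · exact (hv i j).trans (by gcongr)
        · exact dist_comm (v j) (g w) ▸ hg w j hj
    _ = K * dist z w + (2 * R + 2 * K * r) := by ring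

theorem exists_continuous_coarseLipschitz_of_cover {E : Type*} [NormedAddCommGroup E]
    [NormedSpace ℝ E] {v : ι → E} (hK : 0 ≤ K) (hcov : ∀ z, ∃ i, dist z (c i) < r)
    (hv : ∀ i j, dist (v i) (v j) ≤ K * dist (c i) (c j)) :
    ∃ g : Z → E, Continuous g ∧ CoarseLipschitz g ∧
      ∀ z i, dist z (c i) < r → dist (g z) (v i) ≤ 2 * K * r := by
  set t : Z → Set E := fun z => ⋂ (i) (_ : dist z (c i) < r), closedBall (v i) (2 * K * r)
  have ht : ∀ z, Convex ℝ (t z) := fun z =>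
    convex_iInter fun i => convex_iInter fun _ => convex_closedBall _ _
  -- near `z`, the value `v i` at a centre `c i` with `dist z (c i) < r` is an admissible choice
  have hloc : ∀ z, ∃ e : E, ∀ᶠ w in 𝓝 z, e ∈ t w := by
    intro z
    obtain ⟨i, hi⟩ := hcov z
    refine ⟨v i, ?_⟩
    filter_upwards [isOpen_ball.mem_nhds (mem_ball.mpr hi)] with w hw
    simp only [t, Set.mem_iInter, mem_closedBall]
    intro j hj
    calc dist (v i) (v j) ≤ K * dist (c i) (c j) := hv i j
      _ ≤ K * (2 * r) := by
          gcongr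
          linarith [dist_triangle_left (c i) (c j) w, mem_ball.mp hw]
      _ = 2 * K * r := by ring
  obtain ⟨g, hg⟩ := exists_continuous_forall_mem_convex_of_local_const ht hloc
  have hgv : ∀ z i, dist z (c i) < r → dist (g z) (v i) ≤ 2 * K * r := fun z i hi => by
    simpa [t] using Set.mem_iInter₂.mp (hg z) i hi
  exact ⟨g, g.continuous, coarseLipschitz_of_dist_le_of_cover hK hcov hv hgv, hgv⟩

theorem dist_comp_le_of_cover {d : ι → W} {φ : Z → W} {ψ : W → Z} {s R R' : ℝ}
    (hc : ∀ z, ∃ i, dist z (c i) < r) (hd : ∀ w, ∃ j, dist w (d j) < s)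
    (hφ : ∀ z i, dist z (c i) < r → dist (φ z) (d i) ≤ R)
    (hψ : ∀ w j, dist w (d j) < s → dist (ψ w) (c j) ≤ R')
    (hK : 0 ≤ K) (hcd : ∀ i j, dist (c i) (c j) ≤ K * dist (d i) (d j)) (z : Z) :
    dist (ψ (φ z)) z ≤ R' + K * (s + R) + r := by
  obtain ⟨i, hi⟩ := hc z
  obtain ⟨j, hj⟩ := hd (φ z)
  have hdji : dist (d j) (d i) ≤ s + R := by
    linarith [dist_triangle_left (d j) (d i) (φ z), hφ z i hi]
  calc dist (ψ (φ z)) z ≤ dist (ψ (φ z)) (c j) + dist (c j) (c i) + dist (c i) z :=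
        dist_triangle4 _ _ _ _
    _ ≤ R' + K * (s + R) + r := by
        gcongr
        · exact hψ _ j hj
        · exact (hcd j i).trans (by gcongr)
        · exact (dist_comm (c i) z ▸ hi).le

end Cover

theorem exists_continuous_coarse_inverses_of_cover {X Y ι : Type*} [NormedAddCommGroup X]
    [NormedSpace ℝ X] [NormedAddCommGroup Y] [NormedSpace ℝ Y] {c : ι → X} {d : ι → Y}
    {r s K : ℝ} (hK : 0 ≤ K) (hc : ∀ x, ∃ i, dist x (c i) < r) (hd : ∀ y, ∃ j, dist y (d j) < s)
    (hdc : ∀ i j, dist (d i) (d j) ≤ K * dist (c i) (c j))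
    (hcd : ∀ i j, dist (c i) (c j) ≤ K * dist (d i) (d j)) :
    ∃ (φ : X → Y) (ψ : Y → X) (C : ℝ),
      Continuous φ ∧ Continuous ψ ∧ CoarseLipschitz φ ∧ CoarseLipschitz ψ ∧
      (∀ x i, dist x (c i) < r → dist (φ x) (d i) ≤ C) ∧
      (∀ x, dist (ψ (φ x)) x ≤ C) ∧ (∀ y, dist (φ (ψ y)) y ≤ C) := by
  obtain ⟨φ, hφc, hφcl, hφ⟩ := exists_continuous_coarseLipschitz_of_cover hK hc hdc
  obtain ⟨ψ, hψc, hψcl, hψ⟩ := exists_continuous_coarseLipschitz_of_cover hK hd hcd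
  have hψφ := dist_comp_le_of_cover hc hd hφ hψ hK hcd
  have hφψ := dist_comp_le_of_cover hd hc hψ hφ hK hdc
  refine ⟨φ, ψ, max (2 * K * r) (max (2 * K * s + K * (s + 2 * K * r) + r)
    (2 * K * r + K * (r + 2 * K * s) + s)), hφc, hψc, hφcl, hψcl, ?_, ?_, ?_⟩
  · exact fun x i hi => (hφ x i hi).trans (le_max_left _ _)
  · exact fun x => (hψφ x).trans ((le_max_left _ _).trans (le_max_right _ _))
  · exact fun y => (hφψ y).trans ((le_max_right _ _).trans (le_max_right _ _))

theorem stmt2_general {X Y : Type*} [NormedAddCommGroup X] [NormedSpace ℝ X]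
    [NormedAddCommGroup Y] [NormedSpace ℝ Y]
    (f : X → Y) (hf : CoarseLipschitz f)
    (h : ∃ A₀ K : ℝ, 0 < A₀ ∧ 1 ≤ K ∧ ∀ A : ℝ, A₀ ≤ A → ∀ 𝓜 : Set X, IsMaxSep A 𝓜 →
      IsNet (f '' 𝓜) ∧ ∀ x ∈ 𝓜, ∀ x' ∈ 𝓜,
        (1 / K) * ‖x - x'‖ ≤ ‖f x - f x'‖ ∧ ‖f x - f x'‖ ≤ K * ‖x - x'‖) :
    ∃ (φ : X → Y) (ψ : Y → X) (C : ℝ), 0 ≤ C ∧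
      Continuous φ ∧ Continuous ψ ∧ CoarseLipschitz φ ∧ CoarseLipschitz ψ ∧
      (∀ x : X, ‖φ x - f x‖ ≤ C) ∧
      (∀ x : X, ‖ψ (φ x) - x‖ ≤ C) ∧ (∀ y : Y, ‖φ (ψ y) - y‖ ≤ C) := by
  obtain ⟨A₀, K, hA₀, hK, hnet⟩ := h
  obtain ⟨𝓜, h𝓜⟩ := exists_isMaxSep (M := X) A₀
  obtain ⟨hnetY, hbi⟩ := hnet A₀ le_rfl 𝓜 h𝓜
  have hcovX (x : X) : ∃ m : 𝓜, dist x m < A₀ := by simpa using h𝓜.exists_dist_lt hA₀ x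
  obtain ⟨b, hcovY⟩ : ∃ b, ∀ y, ∃ m : 𝓜, dist y (f m) < b := by
    obtain ⟨m, hm, -⟩ := h𝓜.exists_dist_lt hA₀ 0
    obtain ⟨b, hb⟩ := hnetY.exists_forall_exists_dist_lt ⟨f m, m, hm, rfl⟩
    exact ⟨b, fun y => by simpa using hb y⟩
  have hup (m m' : 𝓜) : dist (f m) (f m') ≤ K * dist (m : X) m' := by
    simpa only [dist_eq_norm] using (hbi m m.2 m' m'.2).2
  have hlow (m m' : 𝓜) : dist (m : X) m' ≤ K * dist (f m) (f m') := by
    simpa only [dist_eq_norm] using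
      (inv_mul_le_iff₀ (by linarith)).mp (one_div K ▸ (hbi m m.2 m' m'.2).1)
  obtain ⟨φ, ψ, C, hφc, hψc, hφcl, hψcl, hφ, hψφ, hφψ⟩ :=
    exists_continuous_coarse_inverses_of_cover (by linarith) hcovX hcovY hup hlow
  obtain ⟨L, B, hL, hfLB⟩ := hf.exists_dist_le_mul_add
  have hφf (x : X) : dist (φ x) (f x) ≤ C + (L * A₀ + B) := by
    obtain ⟨m, hxm⟩ := hcovX x
    have hfm : dist (f m) (f x) ≤ L * A₀ + B := by
      nlinarith [hfLB m x, dist_comm (m : X) x]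
    linarith [dist_triangle (φ x) (f m) (f x), hφ x m hxm]
  have hC : 0 ≤ C := dist_nonneg.trans (hψφ 0)
  refine ⟨φ, ψ, C + |L * A₀ + B|, by positivity, hφc, hψc, hφcl, hψcl, ?_, ?_, ?_⟩ <;>
    intro <;> rw [← dist_eq_norm]
  · exact (hφf _).trans (by gcongr; exact le_abs_self _)
  · exact (hψφ _).trans (le_add_of_nonneg_right (abs_nonneg _))
  · exact (hφψ _).trans (le_add_of_nonneg_right (abs_nonneg _))

/-- from the net condition one gets continuous coarse Lipschitz maps
`φ, ψ` with `φ` uniformly close to `f` and `ψ` a coarse inverse of `φ`. -/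
theorem stmt2 {X Y : Type*} [NormedAddCommGroup X] [NormedSpace ℝ X] [CompleteSpace X]
    [NormedAddCommGroup Y] [NormedSpace ℝ Y] [CompleteSpace Y]
    (f : X → Y) (hf : CoarseLipschitz f)
    (h : ∃ A₀ K : ℝ, 0 < A₀ ∧ 1 ≤ K ∧ ∀ A : ℝ, A₀ ≤ A → ∀ 𝓜 : Set X, IsMaxSep A 𝓜 →
      IsNet (f '' 𝓜) ∧ ∀ x ∈ 𝓜, ∀ x' ∈ 𝓜,
        (1 / K) * ‖x - x'‖ ≤ ‖f x - f x'‖ ∧ ‖f x - f x'‖ ≤ K * ‖x - x'‖) :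
    ∃ (φ : X → Y) (ψ : Y → X) (C : ℝ), 0 ≤ C ∧
      Continuous φ ∧ Continuous ψ ∧ CoarseLipschitz φ ∧ CoarseLipschitz ψ ∧
      (∀ x : X, ‖φ x - f x‖ ≤ C) ∧
      (∀ x : X, ‖ψ (φ x) - x‖ ≤ C) ∧ (∀ y : Y, ‖φ (ψ y) - y‖ ≤ C) :=
  stmt2_general f hf h
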